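/- arXiv:2110.08579 — 9 statements merged into one kernel-verified Lean document; each statement's English description precedes it below -/
import Mathlib

section
/- Let J ≥ 1 and let P : Fin J → Fin J → ℝ be a matrix with P j k ≥ 0 and P j j = 0 for all j, k, whose row sums satisfy ∑_k P j k ≤ 1 for every j, and such that for every j there exists an integer n ≥ 1 with ∑_k (P^n) j k < 1 (every customer may eventually leave the network). Then the matrix 1 − Pᵀ is invertible; consequently, for every ν : Fin J → ℝ the traffic equations α j = ν j + ∑_k α k * P k j (for all j) have exactly one solution α : Fin J → ℝ. -/
open Finset

lemma pow_entry_nonneg {J : ℕ} (P : Matrix (Fin J) (Fin J) ℝ)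
    (hP0 : ∀ j k, 0 ≤ P j k) (n : ℕ) : ∀ j k, 0 ≤ (P ^ n) j k := by
  induction n with
  | zero => intro j k; rw [pow_zero]; by_cases h : j = k <;> simp [Matrix.one_apply, h]
  | succ n ih =>
    intro j k
    rw [pow_succ, Matrix.mul_apply]
    exact Finset.sum_nonneg fun i _ => mul_nonneg (ih j i) (hP0 i k)

/-- For a substochastic routing matrix `P` of an open Jackson network
(nonnegative entries, zero diagonal, row sums at most one) such that from every node a
customer may eventually leave the network (for every `j` some power `P ^ n`, `n ≥ 1`, has
`j`-th row sum strictly less than one), the matrix `1 - Pᵀ` is invertible; consequently,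
for every vector `ν` of exogenous arrival rates the traffic equations
`α j = ν j + ∑ k, α k * P k j` have exactly one solution `α`. -/
theorem traffic_equations_unique_solution
    (J : ℕ) (hJ : 1 ≤ J) (P : Matrix (Fin J) (Fin J) ℝ)
    (hP0 : ∀ j k, 0 ≤ P j k)
    (hPd : ∀ j, P j j = 0)
    (hPs : ∀ j, ∑ k, P j k ≤ 1)
    (hleak : ∀ j, ∃ n : ℕ, 1 ≤ n ∧ ∑ k, (P ^ n) j k < 1) :
    IsUnit (1 - P.transpose) ∧
      ∀ ν : Fin J → ℝ, ∃! α : Fin J → ℝ, ∀ j, α j = ν j + ∑ k, α k * P k j := by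
  -- Step 1: kernel of (1 - P) is trivial
  have hker : ∀ x : Fin J → ℝ, (1 - P).mulVec x = 0 → x = 0 := by
    intro x hx
    have hfix : P.mulVec x = x := by
      have h1 : (1 : Matrix (Fin J) (Fin J) ℝ).mulVec x - P.mulVec x = 0 := by
        rw [← Matrix.sub_mulVec, hx]
      have := sub_eq_zero.mp h1
      rw [Matrix.one_mulVec] at this
      exact this.symm
    have hfixn : ∀ n : ℕ, (P ^ n).mulVec x = x := by
      intro n
      induction n with
      | zero => simp
      | succ n ih => rw [pow_succ, ← Matrix.mulVec_mulVec, hfix, ih]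
    by_contra hx0
    obtain ⟨j, _, hj⟩ := Finset.exists_max_image (Finset.univ : Finset (Fin J))
      (fun k => |x k|) ⟨⟨0, hJ⟩, Finset.mem_univ _⟩
    have hM : 0 < |x j| := by
      rcases Function.ne_iff.mp hx0 with ⟨k, hk⟩
      exact lt_of_lt_of_le (abs_pos.mpr hk) (hj k (Finset.mem_univ k))
    obtain ⟨n, _, hn⟩ := hleak j
    have hxj : x j = ∑ k, (P ^ n) j k * x k := by
      have := congrFun (hfixn n) j
      simpa [Matrix.mulVec, dotProduct] using this.symm
    have h1 : |x j| ≤ (∑ k, (P ^ n) j k) * |x j| := by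
      rw [Finset.sum_mul]
      calc |x j| = |∑ k, (P ^ n) j k * x k| := by rw [hxj]
        _ ≤ ∑ k, |(P ^ n) j k * x k| := Finset.abs_sum_le_sum_abs _ _
        _ ≤ ∑ k, (P ^ n) j k * |x j| := by
            apply Finset.sum_le_sum
            intro k _
            rw [abs_mul, abs_of_nonneg (pow_entry_nonneg P hP0 n j k)]
            exact mul_le_mul_of_nonneg_left (hj k (Finset.mem_univ k))
              (pow_entry_nonneg P hP0 n j k)
    nlinarith
  have hdet : (1 - P).det ≠ 0 := by
    intro h
    obtain ⟨v, hv0, hv⟩ := (Matrix.exists_mulVec_eq_zero_iff).mpr h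
    exact hv0 (hker v hv)
  have htr : (1 - P.transpose) = (1 - P).transpose := by
    rw [Matrix.transpose_sub, Matrix.transpose_one]
  have hAdet : IsUnit (1 - P.transpose).det := by
    rw [htr, Matrix.det_transpose]; exact isUnit_iff_ne_zero.mpr hdet
  have hU : IsUnit (1 - P.transpose) :=
    (Matrix.isUnit_iff_isUnit_det _).mpr hAdet
  refine ⟨hU, ?_⟩
  intro ν
  set A := 1 - P.transpose with hA
  have hentry : ∀ (α : Fin J → ℝ) j, A.mulVec α j = α j - ∑ k, α k * P k j := by
    intro α j
    have h : A.mulVec α j = ∑ k, ((if j = k then (1:ℝ) else 0) * α k - P k j * α k) := by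
      simp [hA, Matrix.mulVec, dotProduct, Matrix.sub_apply, Matrix.one_apply,
        Matrix.transpose_apply, sub_mul]
    rw [h, Finset.sum_sub_distrib]
    simp [mul_comm]
  refine ⟨A⁻¹.mulVec ν, ?_, ?_⟩
  · intro j
    have h : A.mulVec (A⁻¹.mulVec ν) = ν := by
      rw [Matrix.mulVec_mulVec, Matrix.mul_nonsing_inv _ hAdet, Matrix.one_mulVec]
    have h2 := congrFun h j
    rw [hentry] at h2
    linarith
  · intro β hβ
    have hβ' : A.mulVec β = ν := funext fun j => by
      rw [hentry]; have := hβ j; linarith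
    calc β = A⁻¹.mulVec (A.mulVec β) := by
            rw [Matrix.mulVec_mulVec, Matrix.nonsing_inv_mul _ hAdet, Matrix.one_mulVec]
      _ = A⁻¹.mulVec ν := by rw [hβ']
end

section
/- Let J ≥ 1 and let P : Fin J → Fin J → ℝ be a matrix with P j k ≥ 0 and P j j = 0 for all j, k, with row sums ∑_k P j k ≤ 1, such that for every j there exists n ≥ 1 with ∑_k (P^n) j k < 1, and such that for all j ≠ k there exists n ≥ 1 with (P^n) j k > 0 (every node may be visited after any other). Let ν : Fin J → ℝ satisfy ν j ≥ 0 for all j and ν ≠ 0. Then the unique solution α : Fin J → ℝ of the traffic equations α j = ν j + ∑_k α k * P k j satisfies α j > 0 for every j. -/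
open Finset

/-- For a substochastic routing matrix `P` of an open Jackson network
(nonnegative entries, zero diagonal, row sums at most one), such that from every node a
customer may eventually leave the network, and such that every node may be visited after
any other (for `j ≠ k` some power `P ^ n`, `n ≥ 1`, has positive `(j,k)` entry), and for
exogenous arrival rates `ν` that are nonnegative and not identically zero, the unique
solution `α` of the traffic equations `α j = ν j + ∑ k, α k * P k j` is strictly positive
in every coordinate. -/
theorem traffic_solution_positive
    (J : ℕ) (hJ : 1 ≤ J) (P : Matrix (Fin J) (Fin J) ℝ)
    (hP0 : ∀ j k, 0 ≤ P j k)
    (hPd : ∀ j, P j j = 0)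
    (hPs : ∀ j, ∑ k, P j k ≤ 1)
    (hleak : ∀ j, ∃ n : ℕ, 1 ≤ n ∧ ∑ k, (P ^ n) j k < 1)
    (hvisit : ∀ j k, j ≠ k → ∃ n : ℕ, 1 ≤ n ∧ 0 < (P ^ n) j k)
    (ν : Fin J → ℝ) (hν : ∀ j, 0 ≤ ν j) (hν0 : ν ≠ 0)
    (α : Fin J → ℝ) (htraffic : ∀ j, α j = ν j + ∑ k, α k * P k j) :
    ∀ j, 0 < α j := by
  haveI hne : Nonempty (Fin J) := ⟨⟨0, by omega⟩⟩
  -- powers have nonnegative entries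
  have hpow0 : ∀ (n : ℕ) (j k : Fin J), 0 ≤ (P ^ n) j k := by
    intro n
    induction n with
    | zero =>
        intro j k
        by_cases h : j = k <;> simp [Matrix.one_apply, h]
    | succ n ih =>
        intro j k
        rw [pow_succ, Matrix.mul_apply]
        exact Finset.sum_nonneg fun m _ => mul_nonneg (ih j m) (hP0 m k)
  -- row sums of powers are ≤ 1
  have hrow1 : ∀ (n : ℕ) (j : Fin J), ∑ k, (P ^ n) j k ≤ 1 := by
    intro n
    induction n with
    | zero => intro j; simp [Matrix.one_apply]
    | succ n ih =>
        intro j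
        rw [pow_succ']
        calc ∑ k, (P * P ^ n) j k = ∑ m, P j m * ∑ k, (P ^ n) m k := by
              simp only [Matrix.mul_apply, Finset.mul_sum]
              exact Finset.sum_comm
          _ ≤ ∑ m, P j m * 1 := Finset.sum_le_sum fun m _ =>
              mul_le_mul_of_nonneg_left (ih m) (hP0 j m)
          _ ≤ 1 := by simpa using hPs j
  -- row sum splitting for powers
  have hsplit : ∀ (a b : ℕ) (j : Fin J),
      ∑ k, (P ^ (a + b)) j k = ∑ m, (P ^ a) j m * ∑ k, (P ^ b) m k := by
    intro a b j
    rw [pow_add]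
    simp only [Matrix.mul_apply, Finset.mul_sum]
    exact Finset.sum_comm
  -- row sums are monotone non-increasing
  have hmono : ∀ (a b : ℕ) (j : Fin J),
      ∑ k, (P ^ (a + b)) j k ≤ ∑ k, (P ^ a) j k := by
    intro a b j
    rw [hsplit]
    calc ∑ m, (P ^ a) j m * ∑ k, (P ^ b) m k ≤ ∑ m, (P ^ a) j m * 1 :=
          Finset.sum_le_sum fun m _ =>
            mul_le_mul_of_nonneg_left (hrow1 b m) (hpow0 a j m)
      _ = ∑ k, (P ^ a) j k := by simp
  -- a uniform power with all row sums < 1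
  obtain ⟨N, hN1, hNlt⟩ : ∃ N : ℕ, 1 ≤ N ∧ ∀ j, ∑ k, (P ^ N) j k < 1 := by
    choose f hf1 hflt using hleak
    refine ⟨max 1 (Finset.univ.sup f), le_max_left _ _, fun j => ?_⟩
    have hfle : f j ≤ max 1 (Finset.univ.sup f) :=
      le_trans (Finset.le_sup (Finset.mem_univ j)) (le_max_right _ _)
    have h := hmono (f j) (max 1 (Finset.univ.sup f) - f j) j
    rw [Nat.add_sub_cancel' hfle] at h
    exact lt_of_le_of_lt h (hflt j)
  set θ : ℝ := Finset.univ.sup' Finset.univ_nonempty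
      (fun j => ∑ k, (P ^ N) j k) with hθdef
  have hθlt : θ < 1 := (Finset.sup'_lt_iff _).mpr fun j _ => hNlt j
  have hθle : ∀ j, ∑ k, (P ^ N) j k ≤ θ :=
    fun j => Finset.le_sup' (f := fun j => ∑ k, (P ^ N) j k) (Finset.mem_univ j)
  have hθ0 : 0 ≤ θ :=
    le_trans (Finset.sum_nonneg fun k _ => hpow0 N _ k) (hθle (Classical.arbitrary _))
  -- geometric decay of row sums
  have hgeo : ∀ (k : ℕ) (j : Fin J), ∑ c, (P ^ (N * k)) j c ≤ θ ^ k := by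
    intro k
    induction k with
    | zero => intro j; simp [Matrix.one_apply]
    | succ k ih =>
        intro j
        have hnk : N * (k + 1) = N + N * k := by ring
        rw [hnk, hsplit]
        calc ∑ m, (P ^ N) j m * ∑ c, (P ^ (N * k)) m c
              ≤ ∑ m, (P ^ N) j m * θ ^ k :=
              Finset.sum_le_sum fun m _ =>
                mul_le_mul_of_nonneg_left (ih m) (hpow0 N j m)
          _ = (∑ m, (P ^ N) j m) * θ ^ k := by rw [Finset.sum_mul]
          _ ≤ θ * θ ^ k :=
              mul_le_mul_of_nonneg_right (hθle j) (pow_nonneg hθ0 k)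
          _ = θ ^ (k + 1) := (pow_succ' θ k).symm
  -- iterating the traffic equations
  have hiter : ∀ (n : ℕ) (j : Fin J),
      α j = (∑ i ∈ Finset.range n, ∑ m, ν m * (P ^ i) m j)
            + ∑ m, α m * (P ^ n) m j := by
    intro n
    induction n with
    | zero =>
        intro j
        simp [Matrix.one_apply]
    | succ n ih =>
        intro j
        have hT : ∑ m, α m * (P ^ n) m j
            = (∑ m, ν m * (P ^ n) m j) + ∑ m, α m * (P ^ (n + 1)) m j := by
          calc ∑ m, α m * (P ^ n) m j
              = ∑ m, (ν m + ∑ k, α k * P k m) * (P ^ n) m j := by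
                refine Finset.sum_congr rfl fun m _ => ?_
                rw [← htraffic m]
            _ = (∑ m, ν m * (P ^ n) m j)
                + ∑ m, (∑ k, α k * P k m) * (P ^ n) m j := by
                rw [← Finset.sum_add_distrib]
                exact Finset.sum_congr rfl fun m _ => add_mul _ _ _
            _ = (∑ m, ν m * (P ^ n) m j) + ∑ k, α k * (P ^ (n + 1)) k j := by
                congr 1
                rw [pow_succ']
                simp only [Matrix.mul_apply, Finset.sum_mul, Finset.mul_sum, mul_assoc]
                exact Finset.sum_comm
        rw [Finset.sum_range_succ, ih j, hT]
        ring
  -- tail bound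
  set C : ℝ := ∑ m, |α m| with hCdef
  have hC0 : 0 ≤ C := Finset.sum_nonneg fun m _ => abs_nonneg _
  have htail : ∀ (k : ℕ) (j : Fin J),
      |∑ m, α m * (P ^ (N * k)) m j| ≤ C * θ ^ k := by
    intro k j
    calc |∑ m, α m * (P ^ (N * k)) m j| ≤ ∑ m, |α m * (P ^ (N * k)) m j| :=
          Finset.abs_sum_le_sum_abs _ _
      _ = ∑ m, |α m| * (P ^ (N * k)) m j := by
          refine Finset.sum_congr rfl fun m _ => ?_
          rw [abs_mul, abs_of_nonneg (hpow0 _ m j)]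
      _ ≤ ∑ m, |α m| * θ ^ k := Finset.sum_le_sum fun m _ =>
          mul_le_mul_of_nonneg_left
            (le_trans (Finset.single_le_sum (fun c _ => hpow0 _ m c)
              (Finset.mem_univ j)) (hgeo k m))
            (abs_nonneg _)
      _ = C * θ ^ k := by rw [← Finset.sum_mul]
  -- a node with positive exogenous rate
  obtain ⟨j0, hj0⟩ := Function.ne_iff.mp hν0
  have hνj0 : 0 < ν j0 := lt_of_le_of_ne (hν j0) (by simpa using (Ne.symm hj0))
  intro j
  -- a positive series term at node j
  obtain ⟨n0, ε, hε, hterm⟩ :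
      ∃ (n0 : ℕ) (ε : ℝ), 0 < ε ∧ ε ≤ ∑ m, ν m * (P ^ n0) m j := by
    by_cases h : j0 = j
    · refine ⟨0, ν j0, hνj0, ?_⟩
      have h1 : ν j0 * (P ^ 0) j0 j = ν j0 := by subst h; simp [Matrix.one_apply]
      calc ν j0 = ν j0 * (P ^ 0) j0 j := h1.symm
        _ ≤ ∑ m, ν m * (P ^ 0) m j :=
          Finset.single_le_sum (fun m _ => mul_nonneg (hν m) (hpow0 0 m j))
            (Finset.mem_univ j0)
    · obtain ⟨n0, _, hpos⟩ := hvisit j0 j h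
      exact ⟨n0, ν j0 * (P ^ n0) j0 j, mul_pos hνj0 hpos,
        Finset.single_le_sum (fun m _ => mul_nonneg (hν m) (hpow0 n0 m j))
          (Finset.mem_univ j0)⟩
  -- partial sums of the series are at least ε
  have hS : ∀ n, n0 < n → ε ≤ ∑ i ∈ Finset.range n, ∑ m, ν m * (P ^ i) m j := by
    intro n hn
    calc ε ≤ ∑ m, ν m * (P ^ n0) m j := hterm
      _ ≤ ∑ i ∈ Finset.range n, ∑ m, ν m * (P ^ i) m j :=
        Finset.single_le_sum (f := fun i => ∑ m, ν m * (P ^ i) m j)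
          (fun i _ => Finset.sum_nonneg fun m _ => mul_nonneg (hν m) (hpow0 i m j))
          (Finset.mem_range.mpr hn)
  -- choose a large k
  have hδ : 0 < ε / (C + 1) := div_pos hε (by linarith)
  obtain ⟨k0, hk0⟩ := exists_pow_lt_of_lt_one hδ hθlt
  set k := max k0 (n0 + 1) with hkdef
  have hθk : θ ^ k < ε / (C + 1) :=
    lt_of_le_of_lt (pow_le_pow_of_le_one hθ0 (le_of_lt hθlt) (le_max_left _ _)) hk0
  have hn0k : n0 < N * k := by
    have h1 : n0 + 1 ≤ k := le_max_right _ _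
    have h2 : k ≤ N * k := Nat.le_mul_of_pos_left k (by omega)
    omega
  have heq := hiter (N * k) j
  have habs := abs_le.mp (htail k j)
  have hεS := hS (N * k) hn0k
  have hCθ : C * θ ^ k < ε := by
    have h2 : θ ^ k * (C + 1) < ε := (lt_div_iff₀ (by linarith)).mp hθk
    nlinarith [pow_nonneg hθ0 k]
  linarith [habs.1]
end

section
/- Assume α : Fin J → ℝ satisfies the traffic equations α j = ν j + ∑_k α k * p k j with α j > 0 for all j. Then for every state n : Fin J → ℕ and every node j with n j ≥ 1, the partial balance equation (2.8) holds: w(n) * ((1 − ∑_k p j k) * μ j (n j) + ∑_k p j k * μ j (n j)) = w(T_{j·} n) * ν j + ∑_k w(T_{jk} n) * p k j * μ k (n k + 1). -/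
open Finset

/-- Unnormalized product-form weight `w n = ∏ j, (α j)^(n j) / ∏_{r=1}^{n j} μ j r`. -/
noncomputable def jacksonWeight (J : ℕ) (α : Fin J → ℝ) (μ : Fin J → ℕ → ℝ)
    (n : Fin J → ℕ) : ℝ :=
  ∏ j, (α j) ^ (n j) / ∏ r ∈ Finset.Icc 1 (n j), μ j r

/-- Operator `T_{jk}`: move one customer from node `j` to node `k`
(decrease coordinate `j` by one, increase coordinate `k` by one). -/
def moveJK (J : ℕ) (j k : Fin J) (n : Fin J → ℕ) : Fin J → ℕ :=
  Function.update (Function.update n j (n j - 1)) k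
    ((Function.update n j (n j - 1)) k + 1)

/-- Operator `T_{j·}`: one customer departs from node `j`
(decrease coordinate `j` by one). -/
def departJ (J : ℕ) (j : Fin J) (n : Fin J → ℕ) : Fin J → ℕ :=
  Function.update n j (n j - 1)

/-- **partial balance equation (2.8).** In an open Jackson network, if `α`
solves the traffic equations and is positive, then for every state `n` and node `j` with
`n j ≥ 1`: -/
lemma jacksonWeight_inc (J : ℕ) (α : Fin J → ℝ) (μ : Fin J → ℕ → ℝ)
    (hμ : ∀ j m, 1 ≤ m → 0 < μ j m) (m : Fin J → ℕ) (j : Fin J) :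
    jacksonWeight J α μ (Function.update m j (m j + 1)) * μ j (m j + 1)
      = jacksonWeight J α μ m * α j := by
  unfold jacksonWeight
  have key : ∀ i : Fin J,
      α i ^ (Function.update m j (m j + 1) i) /
        ∏ r ∈ Finset.Icc 1 (Function.update m j (m j + 1) i), μ i r =
      Function.update (fun i => α i ^ (m i) / ∏ r ∈ Finset.Icc 1 (m i), μ i r) j
        (α j ^ (m j + 1) / ∏ r ∈ Finset.Icc 1 (m j + 1), μ j r) i := by
    intro i
    rcases eq_or_ne i j with h | h
    · subst h; simp
    · simp [Function.update_of_ne h]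
  rw [Finset.prod_congr rfl (fun i _ => key i), Finset.prod_update_of_mem (mem_univ j),
    ← Finset.mul_prod_erase univ (fun i => α i ^ (m i) / ∏ r ∈ Finset.Icc 1 (m i), μ i r)
      (mem_univ j)]
  have hF : α j ^ (m j + 1) / (∏ r ∈ Finset.Icc 1 (m j + 1), μ j r) * μ j (m j + 1)
      = α j ^ (m j) / (∏ r ∈ Finset.Icc 1 (m j), μ j r) * α j := by
    rw [Finset.prod_Icc_succ_top (Nat.le_add_left 1 (m j))]
    have h1 : μ j (m j + 1) ≠ 0 := (hμ j _ (Nat.le_add_left 1 (m j))).ne'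
    have h2 : (∏ r ∈ Finset.Icc 1 (m j), μ j r) ≠ 0 := by
      apply Finset.prod_ne_zero_iff.mpr
      intro r hr
      exact (hμ j r (Finset.mem_Icc.mp hr).1).ne'
    field_simp
    ring
  calc (α j ^ (m j + 1) / ∏ r ∈ Finset.Icc 1 (m j + 1), μ j r) *
        (∏ i ∈ univ \ {j}, α i ^ (m i) / ∏ r ∈ Finset.Icc 1 (m i), μ i r) *
        μ j (m j + 1)
      = (α j ^ (m j + 1) / (∏ r ∈ Finset.Icc 1 (m j + 1), μ j r) * μ j (m j + 1)) *
        (∏ i ∈ univ \ {j}, α i ^ (m i) / ∏ r ∈ Finset.Icc 1 (m i), μ i r) := by ring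
    _ = (α j ^ (m j) / (∏ r ∈ Finset.Icc 1 (m j), μ j r) * α j) *
        (∏ i ∈ univ \ {j}, α i ^ (m i) / ∏ r ∈ Finset.Icc 1 (m i), μ i r) := by rw [hF]
    _ = _ := by rw [Finset.sdiff_singleton_eq_erase]; ring

/-- **partial balance equation (2.8).** In an open Jackson network, if `α`
solves the traffic equations and is positive, then for every state `n` and node `j` with
`n j ≥ 1`:
`w(n) * ((1 - ∑_k p j k) * μ j (n j) + ∑_k p j k * μ j (n j))
  = w(T_{j·} n) * ν j + ∑_k w(T_{jk} n) * p k j * μ k (n k + 1)`. -/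
theorem jackson_partial_balance_node
    (J : ℕ) (hJ : 1 ≤ J)
    (p : Fin J → Fin J → ℝ) (ν : Fin J → ℝ) (μ : Fin J → ℕ → ℝ) (α : Fin J → ℝ)
    (hp0 : ∀ j k, 0 ≤ p j k) (hpd : ∀ j, p j j = 0) (hps : ∀ j, ∑ k, p j k ≤ 1)
    (hν : ∀ j, 0 ≤ ν j)
    (hμ0 : ∀ j, μ j 0 = 0) (hμ : ∀ j m, 1 ≤ m → 0 < μ j m)
    (htraffic : ∀ j, α j = ν j + ∑ k, α k * p k j)
    (hα : ∀ j, 0 < α j)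
    (n : Fin J → ℕ) (j : Fin J) (hnj : 1 ≤ n j) :
    jacksonWeight J α μ n *
        ((1 - ∑ k, p j k) * μ j (n j) + ∑ k, p j k * μ j (n j)) =
      jacksonWeight J α μ (departJ J j n) * ν j +
        ∑ k, jacksonWeight J α μ (moveJK J j k n) * p k j * μ k (n k + 1) := by
  set m : Fin J → ℕ := Function.update n j (n j - 1) with hm
  have hmj : m j + 1 = n j := by
    simp only [hm, Function.update_self]; omega
  have hupdate : Function.update m j (m j + 1) = n := by
    rw [hmj, hm, Function.update_idem, Function.update_eq_self]
  -- w n * μ j (n j) = w m * α j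
  have hwn : jacksonWeight J α μ n * μ j (n j) = jacksonWeight J α μ m * α j := by
    have := jacksonWeight_inc J α μ hμ m j
    rw [hupdate, hmj] at this
    exact this
  -- for k ≠ j, the move weight identity
  have hmove : ∀ k : Fin J, k ≠ j →
      jacksonWeight J α μ (moveJK J j k n) * μ k (n k + 1)
        = jacksonWeight J α μ m * α k := by
    intro k hk
    have hmk : m k = n k := Function.update_of_ne hk _ _
    have hmv : moveJK J j k n = Function.update m k (m k + 1) := rfl
    have := jacksonWeight_inc J α μ hμ m k
    rw [← hmv, hmk] at this
    exact this
  have hsum : ∑ k, jacksonWeight J α μ (moveJK J j k n) * p k j * μ k (n k + 1)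
      = jacksonWeight J α μ m * ∑ k, α k * p k j := by
    rw [Finset.mul_sum]
    apply Finset.sum_congr rfl
    intro k _
    rcases eq_or_ne k j with h | h
    · subst h; rw [hpd]; ring
    · have := hmove k h
      calc jacksonWeight J α μ (moveJK J j k n) * p k j * μ k (n k + 1)
          = jacksonWeight J α μ (moveJK J j k n) * μ k (n k + 1) * p k j := by ring
        _ = jacksonWeight J α μ m * α k * p k j := by rw [this]
        _ = jacksonWeight J α μ m * (α k * p k j) := by ring
  have hdep : departJ J j n = m := rfl
  rw [hdep, hsum]
  have : jacksonWeight J α μ n *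
      ((1 - ∑ k, p j k) * μ j (n j) + ∑ k, p j k * μ j (n j))
      = jacksonWeight J α μ n * μ j (n j) := by
    rw [← Finset.sum_mul]; ring
  rw [this, hwn, htraffic j]
  ring
end

section
/- Assume α : Fin J → ℝ satisfies the traffic equations α j = ν j + ∑_k α k * p k j with α j > 0 for all j. Then for every state n : Fin J → ℕ the partial balance equation (2.9) holds: w(n) * ∑_k ν k = ∑_k w(T_{·k} n) * (1 − ∑_m p k m) * μ k (n k + 1). -/
open Finset

/-- Operator `T_{·k}`: one exogenous customer arrives at node `k`
(increase coordinate `k` by one). -/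
def arriveK (J : ℕ) (k : Fin J) (n : Fin J → ℕ) : Fin J → ℕ :=
  Function.update n k (n k + 1)

/-- **partial balance equation (2.9).** In an open Jackson network, if `α`
solves the traffic equations and is positive, then for every state `n`:
`w(n) * ∑_k ν k = ∑_k w(T_{·k} n) * (1 - ∑_m p k m) * μ k (n k + 1)`. -/
theorem jackson_partial_balance_exogenous
    (J : ℕ) (hJ : 1 ≤ J)
    (p : Fin J → Fin J → ℝ) (ν : Fin J → ℝ) (μ : Fin J → ℕ → ℝ) (α : Fin J → ℝ)
    (hp0 : ∀ j k, 0 ≤ p j k) (hpd : ∀ j, p j j = 0) (hps : ∀ j, ∑ k, p j k ≤ 1)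
    (hν : ∀ j, 0 ≤ ν j)
    (hμ0 : ∀ j, μ j 0 = 0) (hμ : ∀ j m, 1 ≤ m → 0 < μ j m)
    (htraffic : ∀ j, α j = ν j + ∑ k, α k * p k j)
    (hα : ∀ j, 0 < α j)
    (n : Fin J → ℕ) :
    jacksonWeight J α μ n * ∑ k, ν k =
      ∑ k, jacksonWeight J α μ (arriveK J k n) * (1 - ∑ m, p k m) * μ k (n k + 1) := by
  have hμne : ∀ k : Fin J, μ k (n k + 1) ≠ 0 :=
    fun k => ne_of_gt (hμ k (n k + 1) (Nat.le_add_left 1 (n k)))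
  have hw : ∀ k : Fin J, jacksonWeight J α μ (arriveK J k n) * μ k (n k + 1)
      = jacksonWeight J α μ n * α k := by
    intro k
    unfold jacksonWeight arriveK
    rw [← Finset.mul_prod_erase _ _ (Finset.mem_univ k),
        ← Finset.mul_prod_erase Finset.univ (fun j => (α j) ^ (n j) / ∏ r ∈ Finset.Icc 1 (n j), μ j r) (Finset.mem_univ k)]
    have herase : ∏ j ∈ Finset.univ.erase k,
        (α j) ^ (Function.update n k (n k + 1) j) / ∏ r ∈ Finset.Icc 1 (Function.update n k (n k + 1) j), μ j r
        = ∏ j ∈ Finset.univ.erase k, (α j) ^ (n j) / ∏ r ∈ Finset.Icc 1 (n j), μ j r := by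
      apply Finset.prod_congr rfl
      intro j hj
      rw [Function.update_of_ne (Finset.ne_of_mem_erase hj)]
    rw [herase, Function.update_self,
        Finset.prod_Icc_succ_top (Nat.le_add_left 1 (n k)), pow_succ]
    have h1n : μ k (1 + n k) ≠ 0 := by rw [Nat.add_comm]; exact hμne k
    field_simp [h1n]
    rw [mul_right_comm _ (μ k (n k + 1)), mul_div_mul_right _ _ (hμne k)]
  have key : ∀ k : Fin J,
      jacksonWeight J α μ (arriveK J k n) * (1 - ∑ m, p k m) * μ k (n k + 1)
        = jacksonWeight J α μ n * (α k * (1 - ∑ m, p k m)) := by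
    intro k
    calc jacksonWeight J α μ (arriveK J k n) * (1 - ∑ m, p k m) * μ k (n k + 1)
        = jacksonWeight J α μ (arriveK J k n) * μ k (n k + 1) * (1 - ∑ m, p k m) := by ring
      _ = jacksonWeight J α μ n * α k * (1 - ∑ m, p k m) := by rw [hw k]
      _ = _ := by ring
  rw [Finset.sum_congr rfl (fun k _ => key k)]
  rw [show (∑ k, jacksonWeight J α μ n * (α k * (1 - ∑ m, p k m)))
      = jacksonWeight J α μ n * ∑ k, (α k * (1 - ∑ m, p k m)) from
      by rw [Finset.mul_sum]]
  congr 1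
  have h1 : ∑ k, α k * (1 - ∑ m, p k m) = (∑ k, α k) - ∑ k, ∑ m, α k * p k m := by
    rw [← Finset.sum_sub_distrib]
    apply Finset.sum_congr rfl
    intro k _
    rw [← Finset.mul_sum]
    ring
  rw [h1, Finset.sum_comm]
  have h2 : ∑ m : Fin J, ∑ k : Fin J, α k * p k m = ∑ m : Fin J, (α m - ν m) := by
    apply Finset.sum_congr rfl
    intro m _
    have := htraffic m
    linarith
  rw [h2, Finset.sum_sub_distrib]
  ring
end

section
/- Assume α : Fin J → ℝ satisfies the traffic equations α j = ν j + ∑_k α k * p k j with α j > 0 for all j. Then the product-form weight w satisfies the global balance equation (2.6) of the Jackson network Markov process at every state n : Fin J → ℕ: w(n) * ( ∑_{j : n j ≥ 1} (1 − ∑_k p j k) * μ j (n j) + ∑_{j : n j ≥ 1} ∑_k p j k * μ j (n j) + ∑_k ν k ) = ∑_{j : n j ≥ 1} w(T_{j·} n) * ν j + ∑_{j : n j ≥ 1} ∑_k w(T_{jk} n) * p k j * μ k (n k + 1) + ∑_k w(T_{·k} n) * (1 − ∑_m p k m) * μ k (n k + 1). (This is Theorem 2.1: the product-form distribution is stationary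 for the queue-length process.) -/
open Finset

lemma weight_succ (J : ℕ) (α : Fin J → ℝ) (μ : Fin J → ℕ → ℝ)
    (n : Fin J → ℕ) (i : Fin J) (m : ℕ) :
    jacksonWeight J α μ (Function.update n i (m+1)) =
      jacksonWeight J α μ (Function.update n i m) * (α i / μ i (m+1)) := by
  unfold jacksonWeight
  rw [← Finset.mul_prod_erase Finset.univ
        (fun j => (α j) ^ (Function.update n i (m+1) j) /
          ∏ r ∈ Finset.Icc 1 (Function.update n i (m+1) j), μ j r) (Finset.mem_univ i),
      ← Finset.mul_prod_erase Finset.univ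
        (fun j => (α j) ^ (Function.update n i m j) /
          ∏ r ∈ Finset.Icc 1 (Function.update n i m j), μ j r) (Finset.mem_univ i)]
  have hrest : ∀ j ∈ Finset.univ.erase i,
      (α j) ^ (Function.update n i (m+1) j) /
          ∏ r ∈ Finset.Icc 1 (Function.update n i (m+1) j), μ j r
      = (α j) ^ (Function.update n i m j) /
          ∏ r ∈ Finset.Icc 1 (Function.update n i m j), μ j r := by
    intro j hj
    rw [Function.update_of_ne (Finset.ne_of_mem_erase hj),
        Function.update_of_ne (Finset.ne_of_mem_erase hj)]
  rw [Finset.prod_congr rfl hrest]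
  simp only [Function.update_self]
  rw [Finset.prod_Icc_succ_top (Nat.le_add_left 1 m), pow_succ]
  rw [← div_mul_div_comm]
  ring

lemma weight_arrive (J : ℕ) (α : Fin J → ℝ) (μ : Fin J → ℕ → ℝ)
    (n : Fin J → ℕ) (k : Fin J) :
    jacksonWeight J α μ (arriveK J k n) =
      jacksonWeight J α μ n * (α k / μ k (n k + 1)) := by
  have h := weight_succ J α μ n k (n k)
  rwa [Function.update_eq_self] at h

lemma weight_depart (J : ℕ) (α : Fin J → ℝ) (μ : Fin J → ℕ → ℝ)
    (n : Fin J → ℕ) (j : Fin J) (hj : 1 ≤ n j) :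
    jacksonWeight J α μ n =
      jacksonWeight J α μ (departJ J j n) * (α j / μ j (n j)) := by
  obtain ⟨m, hm⟩ : ∃ m, n j = m + 1 := ⟨n j - 1, (Nat.succ_pred_eq_of_pos hj).symm⟩
  have h := weight_succ J α μ n j m
  have h1 : Function.update n j (m+1) = n := by rw [← hm, Function.update_eq_self]
  have h2 : departJ J j n = Function.update n j m := by
    unfold departJ; rw [hm]; simp
  rw [h1] at h
  rw [h2, hm]
  exact h

lemma weight_move (J : ℕ) (α : Fin J → ℝ) (μ : Fin J → ℕ → ℝ)
    (n : Fin J → ℕ) (j k : Fin J) (hk : k ≠ j) :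
    jacksonWeight J α μ (moveJK J j k n) =
      jacksonWeight J α μ (departJ J j n) * (α k / μ k (n k + 1)) := by
  have hd : (Function.update n j (n j - 1)) k = n k := Function.update_of_ne hk _ _
  have h := weight_succ J α μ (Function.update n j (n j - 1)) k (n k)
  have h1 : moveJK J j k n =
      Function.update (Function.update n j (n j - 1)) k (n k + 1) := by
    unfold moveJK; rw [hd]
  have h2 : Function.update (Function.update n j (n j - 1)) k (n k)
      = Function.update n j (n j - 1) := by
    conv_lhs => rw [← hd]
    exact Function.update_eq_self _ _
  rw [h1, h, h2]
  rfl

/-- **Theorem 2.1: global balance equation (2.6).** In an open Jackson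
network, if `α` solves the traffic equations and is positive, the product-form weight `w`
satisfies the global balance equation of the queue-length Markov process at every state:
`w(n) * (∑_{j : n j ≥ 1} (1 - ∑_k p j k) μ j (n j) + ∑_{j : n j ≥ 1} ∑_k p j k μ j (n j)
  + ∑_k ν k)
 = ∑_{j : n j ≥ 1} w(T_{j·} n) ν j + ∑_{j : n j ≥ 1} ∑_k w(T_{jk} n) p k j μ k (n k + 1)
  + ∑_k w(T_{·k} n) (1 - ∑_m p k m) μ k (n k + 1)`,
so the product-form distribution is stationary. -/
theorem jackson_global_balance
    (J : ℕ) (hJ : 1 ≤ J)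
    (p : Fin J → Fin J → ℝ) (ν : Fin J → ℝ) (μ : Fin J → ℕ → ℝ) (α : Fin J → ℝ)
    (hp0 : ∀ j k, 0 ≤ p j k) (hpd : ∀ j, p j j = 0) (hps : ∀ j, ∑ k, p j k ≤ 1)
    (hν : ∀ j, 0 ≤ ν j)
    (hμ0 : ∀ j, μ j 0 = 0) (hμ : ∀ j m, 1 ≤ m → 0 < μ j m)
    (htraffic : ∀ j, α j = ν j + ∑ k, α k * p k j)
    (hα : ∀ j, 0 < α j)
    (n : Fin J → ℕ) :
    jacksonWeight J α μ n *
        ((∑ j ∈ Finset.univ.filter (fun j => 1 ≤ n j), (1 - ∑ k, p j k) * μ j (n j)) +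
         (∑ j ∈ Finset.univ.filter (fun j => 1 ≤ n j), ∑ k, p j k * μ j (n j)) +
         ∑ k, ν k) =
      (∑ j ∈ Finset.univ.filter (fun j => 1 ≤ n j),
          jacksonWeight J α μ (departJ J j n) * ν j) +
        (∑ j ∈ Finset.univ.filter (fun j => 1 ≤ n j),
          ∑ k, jacksonWeight J α μ (moveJK J j k n) * p k j * μ k (n k + 1)) +
        ∑ k, jacksonWeight J α μ (arriveK J k n) * (1 - ∑ m, p k m) * μ k (n k + 1) := by
  classical
  set w := jacksonWeight J α μ n with hw
  have hαne : ∀ k, α k ≠ 0 := fun k => (hα k).ne'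
  have hμne : ∀ (k : Fin J) (m : ℕ), 1 ≤ m → μ k m ≠ 0 := fun k m h => (hμ k m h).ne'
  -- departure weights
  have hdep : ∀ j ∈ Finset.univ.filter (fun j => 1 ≤ n j),
      jacksonWeight J α μ (departJ J j n) = w * (μ j (n j) / α j) := by
    intro j hj
    have hj1 : 1 ≤ n j := (Finset.mem_filter.mp hj).2
    have hd := weight_depart J α μ n j hj1
    have h1 : α j / μ j (n j) * (μ j (n j) / α j) = 1 := by
      rw [div_mul_div_comm, mul_comm]
      exact div_self (mul_ne_zero (hμne j (n j) hj1) (hαne j))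
    rw [hw, hd, mul_assoc, h1, mul_one]
  -- transform each RHS sum
  have e1 : (∑ j ∈ Finset.univ.filter (fun j => 1 ≤ n j),
      jacksonWeight J α μ (departJ J j n) * ν j)
      = ∑ j ∈ Finset.univ.filter (fun j => 1 ≤ n j), w * (μ j (n j) / α j) * ν j := by
    refine Finset.sum_congr rfl fun j hj => ?_
    rw [hdep j hj]
  have e2 : (∑ j ∈ Finset.univ.filter (fun j => 1 ≤ n j),
      ∑ k, jacksonWeight J α μ (moveJK J j k n) * p k j * μ k (n k + 1))
      = ∑ j ∈ Finset.univ.filter (fun j => 1 ≤ n j),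
          w * (μ j (n j) / α j) * ∑ k, α k * p k j := by
    refine Finset.sum_congr rfl fun j hj => ?_
    rw [Finset.mul_sum]
    refine Finset.sum_congr rfl fun k _ => ?_
    by_cases hkj : k = j
    · subst hkj
      rw [hpd k]
      ring
    · rw [weight_move J α μ n j k hkj, hdep j hj]
      have hc : α k / μ k (n k + 1) * μ k (n k + 1) = α k :=
        div_mul_cancel₀ _ (hμne k (n k + 1) (Nat.le_add_left 1 (n k)))
      calc w * (μ j (n j) / α j) * (α k / μ k (n k + 1)) * p k j * μ k (n k + 1)
          = w * (μ j (n j) / α j) * (α k / μ k (n k + 1) * μ k (n k + 1)) * p k j := by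
            ring
        _ = w * (μ j (n j) / α j) * (α k * p k j) := by rw [hc]; ring
  have e3 : (∑ k, jacksonWeight J α μ (arriveK J k n) * (1 - ∑ m, p k m) * μ k (n k + 1))
      = ∑ k, w * (α k * (1 - ∑ m, p k m)) := by
    refine Finset.sum_congr rfl fun k _ => ?_
    rw [weight_arrive J α μ n k, ← hw]
    have hc : α k / μ k (n k + 1) * μ k (n k + 1) = α k :=
      div_mul_cancel₀ _ (hμne k (n k + 1) (Nat.le_add_left 1 (n k)))
    calc w * (α k / μ k (n k + 1)) * (1 - ∑ m, p k m) * μ k (n k + 1)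
        = w * (α k / μ k (n k + 1) * μ k (n k + 1)) * (1 - ∑ m, p k m) := by ring
      _ = w * (α k * (1 - ∑ m, p k m)) := by rw [hc]; ring
  rw [e1, e2, e3]
  -- combine the first two RHS sums using traffic equations
  have e4 : (∑ j ∈ Finset.univ.filter (fun j => 1 ≤ n j), w * (μ j (n j) / α j) * ν j)
      + (∑ j ∈ Finset.univ.filter (fun j => 1 ≤ n j),
          w * (μ j (n j) / α j) * ∑ k, α k * p k j)
      = ∑ j ∈ Finset.univ.filter (fun j => 1 ≤ n j), w * μ j (n j) := by
    rw [← Finset.sum_add_distrib]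
    refine Finset.sum_congr rfl fun j hj => ?_
    have : w * (μ j (n j) / α j) * ν j + w * (μ j (n j) / α j) * ∑ k, α k * p k j
        = w * (μ j (n j) / α j) * (ν j + ∑ k, α k * p k j) := by ring
    rw [this, ← htraffic j, mul_assoc, div_mul_cancel₀ _ (hαne j)]
  rw [e4]
  -- exit-rate sum equals arrival-rate sum
  have e5 : (∑ k, w * (α k * (1 - ∑ m, p k m))) = w * ∑ k, ν k := by
    rw [← Finset.mul_sum]
    congr 1
    have h1 : (∑ k, α k * (1 - ∑ m, p k m))
        = (∑ k, α k) - ∑ k, ∑ m, α k * p k m := by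
      rw [← Finset.sum_sub_distrib]
      refine Finset.sum_congr rfl fun k _ => ?_
      rw [mul_sub, mul_one, Finset.mul_sum]
    rw [h1, Finset.sum_comm]
    have h2 : (∑ k : Fin J, ν k) = ∑ k : Fin J, (α k - ∑ m, α m * p m k) := by
      refine Finset.sum_congr rfl fun k _ => ?_
      rw [htraffic k]
      ring
    rw [h2, Finset.sum_sub_distrib]
  rw [e5]
  -- the service-rate sums on the left
  have e6 : (∑ j ∈ Finset.univ.filter (fun j => 1 ≤ n j), (1 - ∑ k, p j k) * μ j (n j))
      + (∑ j ∈ Finset.univ.filter (fun j => 1 ≤ n j), ∑ k, p j k * μ j (n j))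
      = ∑ j ∈ Finset.univ.filter (fun j => 1 ≤ n j), μ j (n j) := by
    rw [← Finset.sum_add_distrib]
    refine Finset.sum_congr rfl fun j hj => ?_
    rw [← Finset.sum_mul]
    ring
  calc w * ((∑ j ∈ Finset.univ.filter (fun j => 1 ≤ n j), (1 - ∑ k, p j k) * μ j (n j)) +
         (∑ j ∈ Finset.univ.filter (fun j => 1 ≤ n j), ∑ k, p j k * μ j (n j)) +
         ∑ k, ν k)
      = w * ((∑ j ∈ Finset.univ.filter (fun j => 1 ≤ n j), μ j (n j)) + ∑ k, ν k) := by
        rw [e6]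
    _ = (∑ j ∈ Finset.univ.filter (fun j => 1 ≤ n j), w * μ j (n j)) + w * ∑ k, ν k := by
        rw [mul_add, Finset.mul_sum]
end

section
/- Let α : Fin J → ℝ with α j > 0 for all j. Then the reversed transition rates q'(n, n') := w(n') * q(n', n) / w(n) of the Jackson network process satisfy, for every state n : Fin J → ℕ: (i) for all j, k with n j ≥ 1: w(T_{jk} n) * p k j * μ k (n k + 1) = w(n) * α k * p k j * μ j (n j) / α j; (ii) for all j with n j ≥ 1: w(T_{j·} n) * ν j = w(n) * ν j * μ j (n j) / α j; (iii) for all k: w(T_{·k} n) * (1 − ∑_m p k m) * μ k (n k + 1) = w(n) * α k * (1 − ∑_m p k m). Hence the reversed rates are q'(n, T_{jk} n) = α k * p k j * μ j (n j) / α j, q'(n, T_{j·} n) = ν j * μ j (n j) / α j and q'(n, T_{·k} n) = α k * (1 − ∑_m p k m), as asserted in Lemma 2.3. -/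
open Finset

noncomputable def gW (J : ℕ) (α : Fin J → ℝ) (μ : Fin J → ℕ → ℝ) (j : Fin J) (m : ℕ) : ℝ :=
  (α j) ^ m / ∏ r ∈ Finset.Icc 1 m, μ j r

lemma w_eq_prod (J : ℕ) (α : Fin J → ℝ) (μ : Fin J → ℕ → ℝ) (n : Fin J → ℕ) :
    jacksonWeight J α μ n = ∏ j, gW J α μ j (n j) := rfl

lemma gW_pos {J : ℕ} {α : Fin J → ℝ} {μ : Fin J → ℕ → ℝ}
    (hμ : ∀ j m, 1 ≤ m → 0 < μ j m) (hα : ∀ j, 0 < α j) (j : Fin J) (m : ℕ) :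
    0 < gW J α μ j m :=
  div_pos (pow_pos (hα j) m)
    (Finset.prod_pos fun r hr => hμ j r (Finset.mem_Icc.mp hr).1)

lemma w_pos {J : ℕ} {α : Fin J → ℝ} {μ : Fin J → ℕ → ℝ}
    (hμ : ∀ j m, 1 ≤ m → 0 < μ j m) (hα : ∀ j, 0 < α j) (n : Fin J → ℕ) :
    0 < jacksonWeight J α μ n := by
  rw [w_eq_prod]
  exact Finset.prod_pos fun j _ => gW_pos hμ hα j (n j)

lemma gW_succ {J : ℕ} {α : Fin J → ℝ} {μ : Fin J → ℕ → ℝ}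
    (hμ : ∀ j m, 1 ≤ m → 0 < μ j m) (j : Fin J) (m : ℕ) :
    gW J α μ j (m + 1) * μ j (m + 1) = gW J α μ j m * α j := by
  have hP : (∏ r ∈ Finset.Icc 1 m, μ j r) ≠ 0 :=
    ne_of_gt (Finset.prod_pos fun r hr => hμ j r (Finset.mem_Icc.mp hr).1)
  have hμ' : μ j (m + 1) ≠ 0 := ne_of_gt (hμ j (m + 1) (Nat.le_add_left 1 m))
  unfold gW
  rw [Finset.prod_Icc_succ_top (Nat.le_add_left 1 m)]
  field_simp
  ring

lemma w_update {J : ℕ} (α : Fin J → ℝ) (μ : Fin J → ℕ → ℝ) (n : Fin J → ℕ)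
    (j : Fin J) (v : ℕ) :
    jacksonWeight J α μ (Function.update n j v) * gW J α μ j (n j) =
      jacksonWeight J α μ n * gW J α μ j v := by
  have h : (fun i => gW J α μ i (Function.update n j v i)) =
      Function.update (fun i => gW J α μ i (n i)) j (gW J α μ j v) := by
    funext i
    by_cases hi : i = j
    · subst hi; simp
    · simp [hi, Function.update_of_ne hi]
  have e1 : jacksonWeight J α μ (Function.update n j v) =
      gW J α μ j v * ∏ i ∈ Finset.univ.erase j, gW J α μ i (n i) := by
    rw [w_eq_prod, show (∏ i, gW J α μ i (Function.update n j v i)) =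
          ∏ i, Function.update (fun i => gW J α μ i (n i)) j (gW J α μ j v) i from by
        rw [← h],
      Finset.prod_update_of_mem (Finset.mem_univ j), Finset.sdiff_singleton_eq_erase]
  have e2 : jacksonWeight J α μ n =
      gW J α μ j (n j) * ∏ i ∈ Finset.univ.erase j, gW J α μ i (n i) := by
    rw [w_eq_prod]
    exact (Finset.mul_prod_erase Finset.univ (fun i => gW J α μ i (n i))
      (Finset.mem_univ j)).symm
  rw [e1, e2]; ring

lemma w_depart {J : ℕ} {α : Fin J → ℝ} {μ : Fin J → ℕ → ℝ}
    (hμ : ∀ j m, 1 ≤ m → 0 < μ j m) (hα : ∀ j, 0 < α j) (n : Fin J → ℕ)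
    (j : Fin J) (h1 : 1 ≤ n j) :
    jacksonWeight J α μ (departJ J j n) * α j = jacksonWeight J α μ n * μ j (n j) := by
  have hs : n j - 1 + 1 = n j := Nat.succ_pred_eq_of_pos h1
  have h1' := w_update α μ n j (n j - 1)
  have h2' : gW J α μ j (n j) * μ j (n j) = gW J α μ j (n j - 1) * α j := by
    conv_lhs => rw [← hs]
    rw [gW_succ hμ j (n j - 1)]
  have hg : gW J α μ j (n j) ≠ 0 := ne_of_gt (gW_pos hμ hα j (n j))
  apply mul_right_cancel₀ hg
  calc jacksonWeight J α μ (departJ J j n) * α j * gW J α μ j (n j)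
      = jacksonWeight J α μ (departJ J j n) * gW J α μ j (n j) * α j := by ring
    _ = jacksonWeight J α μ n * gW J α μ j (n j - 1) * α j := by rw [departJ, h1']
    _ = jacksonWeight J α μ n * (gW J α μ j (n j - 1) * α j) := by ring
    _ = jacksonWeight J α μ n * (gW J α μ j (n j) * μ j (n j)) := by rw [← h2']
    _ = jacksonWeight J α μ n * μ j (n j) * gW J α μ j (n j) := by ring

lemma w_arrive {J : ℕ} {α : Fin J → ℝ} {μ : Fin J → ℕ → ℝ}
    (hμ : ∀ j m, 1 ≤ m → 0 < μ j m) (hα : ∀ j, 0 < α j) (n : Fin J → ℕ) (k : Fin J) :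
    jacksonWeight J α μ (arriveK J k n) * μ k (n k + 1) =
      jacksonWeight J α μ n * α k := by
  have h1' := w_update α μ n k (n k + 1)
  have h2' := gW_succ (α := α) hμ k (n k)
  have hg : gW J α μ k (n k) ≠ 0 := ne_of_gt (gW_pos hμ hα k (n k))
  apply mul_right_cancel₀ hg
  calc jacksonWeight J α μ (arriveK J k n) * μ k (n k + 1) * gW J α μ k (n k)
      = jacksonWeight J α μ (arriveK J k n) * gW J α μ k (n k) * μ k (n k + 1) := by ring
    _ = jacksonWeight J α μ n * gW J α μ k (n k + 1) * μ k (n k + 1) := by rw [arriveK, h1']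
    _ = jacksonWeight J α μ n * (gW J α μ k (n k + 1) * μ k (n k + 1)) := by ring
    _ = jacksonWeight J α μ n * (gW J α μ k (n k) * α k) := by rw [h2']
    _ = jacksonWeight J α μ n * α k * gW J α μ k (n k) := by ring

lemma w_move {J : ℕ} {α : Fin J → ℝ} {μ : Fin J → ℕ → ℝ}
    (hμ : ∀ j m, 1 ≤ m → 0 < μ j m) (hα : ∀ j, 0 < α j) (n : Fin J → ℕ)
    (j k : Fin J) (hkj : k ≠ j) (h1 : 1 ≤ n j) :
    jacksonWeight J α μ (moveJK J j k n) * (α j * μ k (n k + 1)) =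
      jacksonWeight J α μ n * (α k * μ j (n j)) := by
  have hmv : moveJK J j k n = arriveK J k (departJ J j n) := by
    unfold moveJK arriveK departJ
    rfl
  have hk : (departJ J j n) k = n k := Function.update_of_ne hkj _ n
  have ha := w_arrive hμ hα (departJ J j n) k
  rw [hk] at ha
  have hd := w_depart hμ hα n j h1
  calc jacksonWeight J α μ (moveJK J j k n) * (α j * μ k (n k + 1))
      = jacksonWeight J α μ (arriveK J k (departJ J j n)) * μ k (n k + 1) * α j := by
        rw [hmv]; ring
    _ = jacksonWeight J α μ (departJ J j n) * α k * α j := by rw [ha]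
    _ = jacksonWeight J α μ (departJ J j n) * α j * α k := by ring
    _ = jacksonWeight J α μ n * μ j (n j) * α k := by rw [hd]
    _ = jacksonWeight J α μ n * (α k * μ j (n j)) := by ring

/-- **Lemma 2.3: reversed transition rates.** With `α j > 0` for all `j`,
the reversed rates `q'(n, n') = w(n') q(n', n) / w(n)` of the Jackson network process
satisfy, at every state `n`:
(i)  `w(T_{jk} n) * p k j * μ k (n k + 1) = w(n) * α k * p k j * μ j (n j) / α j`
     for all `j, k` with `n j ≥ 1`;
(ii) `w(T_{j·} n) * ν j = w(n) * ν j * μ j (n j) / α j` for all `j` with `n j ≥ 1`;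
(iii) `w(T_{·k} n) * (1 - ∑_m p k m) * μ k (n k + 1) = w(n) * α k * (1 - ∑_m p k m)`
     for all `k`;
hence `q'(n, T_{jk} n) = α k * p k j * μ j (n j) / α j`,
`q'(n, T_{j·} n) = ν j * μ j (n j) / α j`, and
`q'(n, T_{·k} n) = α k * (1 - ∑_m p k m)`. -/
theorem jackson_reversed_rates
    (J : ℕ) (hJ : 1 ≤ J)
    (p : Fin J → Fin J → ℝ) (ν : Fin J → ℝ) (μ : Fin J → ℕ → ℝ) (α : Fin J → ℝ)
    (hp0 : ∀ j k, 0 ≤ p j k) (hpd : ∀ j, p j j = 0) (hps : ∀ j, ∑ k, p j k ≤ 1)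
    (hν : ∀ j, 0 ≤ ν j)
    (hμ0 : ∀ j, μ j 0 = 0) (hμ : ∀ j m, 1 ≤ m → 0 < μ j m)
    (hα : ∀ j, 0 < α j)
    (n : Fin J → ℕ) :
    (∀ j k, 1 ≤ n j →
        jacksonWeight J α μ (moveJK J j k n) * (p k j * μ k (n k + 1)) =
          jacksonWeight J α μ n * (α k * p k j * μ j (n j) / α j)) ∧
    (∀ j, 1 ≤ n j →
        jacksonWeight J α μ (departJ J j n) * ν j =
          jacksonWeight J α μ n * (ν j * μ j (n j) / α j)) ∧
    (∀ k,
        jacksonWeight J α μ (arriveK J k n) * ((1 - ∑ m, p k m) * μ k (n k + 1)) =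
          jacksonWeight J α μ n * (α k * (1 - ∑ m, p k m))) ∧
    (∀ j k, 1 ≤ n j →
        jacksonWeight J α μ (moveJK J j k n) * (p k j * μ k (n k + 1)) /
            jacksonWeight J α μ n =
          α k * p k j * μ j (n j) / α j) ∧
    (∀ j, 1 ≤ n j →
        jacksonWeight J α μ (departJ J j n) * ν j / jacksonWeight J α μ n =
          ν j * μ j (n j) / α j) ∧
    (∀ k,
        jacksonWeight J α μ (arriveK J k n) * ((1 - ∑ m, p k m) * μ k (n k + 1)) /
            jacksonWeight J α μ n =
          α k * (1 - ∑ m, p k m)) := by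
  have hwpos := w_pos (α := α) hμ hα n
  have hwne : jacksonWeight J α μ n ≠ 0 := ne_of_gt hwpos
  have hαne : ∀ j, α j ≠ 0 := fun j => ne_of_gt (hα j)
  have Hmove : ∀ j k, 1 ≤ n j →
      jacksonWeight J α μ (moveJK J j k n) * (p k j * μ k (n k + 1)) =
        jacksonWeight J α μ n * (α k * p k j * μ j (n j) / α j) := by
    intro j k h1
    by_cases hkj : k = j
    · subst hkj
      rw [hpd k]
      ring
    · have := w_move hμ hα n j k hkj h1
      have hαj := hαne j
      field_simp
      have key := calc jacksonWeight J α μ (moveJK J j k n) * (p k j * μ k (n k + 1)) * α j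
          = jacksonWeight J α μ (moveJK J j k n) * (α j * μ k (n k + 1)) * p k j := by ring
        _ = jacksonWeight J α μ n * (α k * μ j (n j)) * p k j := by rw [this]
        _ = jacksonWeight J α μ n * (α k * p k j * μ j (n j)) := by ring
      linear_combination key
  have Hdep : ∀ j, 1 ≤ n j →
      jacksonWeight J α μ (departJ J j n) * ν j =
        jacksonWeight J α μ n * (ν j * μ j (n j) / α j) := by
    intro j h1
    have hd := w_depart hμ hα n j h1
    have hαj := hαne j
    field_simp
    have key := calc jacksonWeight J α μ (departJ J j n) * ν j * α j
        = jacksonWeight J α μ (departJ J j n) * α j * ν j := by ring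
      _ = jacksonWeight J α μ n * μ j (n j) * ν j := by rw [hd]
      _ = jacksonWeight J α μ n * (ν j * μ j (n j)) := by ring
    linear_combination key
  have Harr : ∀ k,
      jacksonWeight J α μ (arriveK J k n) * ((1 - ∑ m, p k m) * μ k (n k + 1)) =
        jacksonWeight J α μ n * (α k * (1 - ∑ m, p k m)) := by
    intro k
    have ha := w_arrive hμ hα n k
    calc jacksonWeight J α μ (arriveK J k n) * ((1 - ∑ m, p k m) * μ k (n k + 1))
        = jacksonWeight J α μ (arriveK J k n) * μ k (n k + 1) * (1 - ∑ m, p k m) := by ring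
      _ = jacksonWeight J α μ n * α k * (1 - ∑ m, p k m) := by rw [ha]
      _ = jacksonWeight J α μ n * (α k * (1 - ∑ m, p k m)) := by ring
  refine ⟨Hmove, Hdep, Harr, ?_, ?_, ?_⟩
  · intro j k h1
    rw [Hmove j k h1, mul_comm]
    exact mul_div_cancel_right₀ _ hwne
  · intro j h1
    rw [Hdep j h1, mul_comm]
    exact mul_div_cancel_right₀ _ hwne
  · intro k
    rw [Harr k, mul_comm]
    exact mul_div_cancel_right₀ _ hwne
end

section
/- Consider a closed Gordon–Newell network and let α : Fin J → ℝ with α j > 0 satisfy the closed traffic equations α j * ∑_k p j k = ∑_k α k * p k j (equivalently α j = ∑_k α k * p k j, since ∑_k p j k = 1). Then for every state n : Fin J → ℕ with ∑_j n j = N, the global balance equation (3.5) holds: w(n) * ∑_j ∑_k p j k * μ j (n j) = ∑_{j : n j ≥ 1} ∑_k w(T_{jk} n) * p k j * μ k (n k + 1). Consequently π(n) = B_N * w(n), with B_N = (∑_{m : ∑ m j = N} w(m))⁻¹, is a stationary distribution of the closed network (Theorem 3.1). -/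
set_option maxHeartbeats 1000000

open Finset

/-- Unnormalized product-form weight `w n = ∏ j, (α j)^(n j) / ∏_{r=1}^{n j} μ j r`. -/
noncomputable def gordonNewellWeight (J : ℕ) (α : Fin J → ℝ) (μ : Fin J → ℕ → ℝ)
    (n : Fin J → ℕ) : ℝ :=
  ∏ j, (α j) ^ (n j) / ∏ r ∈ Finset.Icc 1 (n j), μ j r

private lemma gn_f_succ {J : ℕ} (α : Fin J → ℝ) (μ : Fin J → ℕ → ℝ) (j : Fin J) (m : ℕ) :
    (α j) ^ (m + 1) / ∏ r ∈ Finset.Icc 1 (m + 1), μ j r =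
      ((α j) ^ m / ∏ r ∈ Finset.Icc 1 m, μ j r) * (α j / μ j (m + 1)) := by
  rw [Finset.prod_Icc_succ_top (Nat.le_add_left 1 m), pow_succ, div_mul_div_comm]

private lemma gn_key {J : ℕ} (α : Fin J → ℝ) (μ : Fin J → ℕ → ℝ)
    (hμ : ∀ j m, 1 ≤ m → 0 < μ j m) (hα : ∀ j, 0 < α j)
    (j k : Fin J) (hjk : j ≠ k) (n : Fin J → ℕ) (hnj : 1 ≤ n j) :
    gordonNewellWeight J α μ (moveJK J j k n) * μ k (n k + 1) * α j =
      gordonNewellWeight J α μ n * μ j (n j) * α k := by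
  obtain ⟨m, hm⟩ : ∃ m, n j = m + 1 := ⟨n j - 1, by omega⟩
  have hTi : ∀ i, moveJK J j k n i = if i = k then n k + 1 else if i = j then m else n i := by
    intro i
    simp only [moveJK, Function.update]
    by_cases hik : i = k
    · subst hik; simp [Ne.symm hjk]
    · by_cases hij : i = j <;> simp [hik, hij, hm, hjk]
  have e1 : ∀ (h : Fin J → ℝ), ∏ i, h i =
      h k * (h j * ∏ i ∈ (Finset.univ.erase k).erase j, h i) := by
    intro h
    rw [← Finset.mul_prod_erase Finset.univ h (Finset.mem_univ k),
      ← Finset.mul_prod_erase _ h (Finset.mem_erase.mpr ⟨hjk, Finset.mem_univ j⟩)]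
  have hR : ∀ i ∈ (Finset.univ.erase k).erase j,
      (α i) ^ (moveJK J j k n i) / ∏ r ∈ Finset.Icc 1 (moveJK J j k n i), μ i r
        = (α i) ^ (n i) / ∏ r ∈ Finset.Icc 1 (n i), μ i r := by
    intro i hi
    simp only [Finset.mem_erase] at hi
    rw [hTi i, if_neg hi.2.1, if_neg hi.1]
  unfold gordonNewellWeight
  rw [e1, e1 (fun i => (α i) ^ (n i) / ∏ r ∈ Finset.Icc 1 (n i), μ i r),
    Finset.prod_congr rfl hR]
  have hTk : moveJK J j k n k = n k + 1 := by rw [hTi k]; simp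
  have hTj : moveJK J j k n j = m := by rw [hTi j]; simp [hjk]
  rw [hTk, hTj, hm, gn_f_succ α μ k (n k), gn_f_succ α μ j m]
  have h1 : μ k (n k + 1) ≠ 0 := (hμ k _ (by omega)).ne'
  have h2 : μ j (m + 1) ≠ 0 := (hμ j _ (by omega)).ne'
  have c1 : α k / μ k (n k + 1) * μ k (n k + 1) = α k := div_mul_cancel₀ _ h1
  have c2 : α j / μ j (m + 1) * μ j (m + 1) = α j := div_mul_cancel₀ _ h2
  linear_combination
    ((α k ^ n k / ∏ r ∈ Finset.Icc 1 (n k), μ k r) *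
      (α j ^ m / ∏ r ∈ Finset.Icc 1 m, μ j r) *
      (∏ i ∈ (Finset.univ.erase k).erase j, α i ^ n i / ∏ r ∈ Finset.Icc 1 (n i), μ i r) *
      α j) * c1 -
    ((α k ^ n k / ∏ r ∈ Finset.Icc 1 (n k), μ k r) *
      (α j ^ m / ∏ r ∈ Finset.Icc 1 m, μ j r) *
      (∏ i ∈ (Finset.univ.erase k).erase j, α i ^ n i / ∏ r ∈ Finset.Icc 1 (n i), μ i r) *
      α k) * c2

/-- **Theorem 3.1.** In a closed Gordon–Newell network with `J` nodes and
`N` customers, if `α` is positive and satisfies the closed traffic equations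
`α j * ∑_k p j k = ∑_k α k * p k j`, then for every state `n` with `∑ j, n j = N` the
global balance equation (3.5) holds:
`w(n) * ∑_j ∑_k p j k * μ j (n j)
  = ∑_{j : n j ≥ 1} ∑_k w(T_{jk} n) * p k j * μ k (n k + 1)`;
consequently `π(n) = B_N * w(n)`, with
`B_N = (∑_{m : ∑ m j = N} w(m))⁻¹`, is a stationary distribution of the closed network. -/
theorem gordon_newell_stationary
    (J N : ℕ) (hJ : 1 ≤ J) (hN : 1 ≤ N)
    (p : Fin J → Fin J → ℝ) (μ : Fin J → ℕ → ℝ) (α : Fin J → ℝ)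
    (hp0 : ∀ j k, 0 ≤ p j k) (hpd : ∀ j, p j j = 0) (hps : ∀ j, ∑ k, p j k = 1)
    (hμ0 : ∀ j, μ j 0 = 0) (hμ : ∀ j m, 1 ≤ m → 0 < μ j m)
    (hα : ∀ j, 0 < α j)
    (htraffic : ∀ j, α j * ∑ k, p j k = ∑ k, α k * p k j) :
    (∀ n : Fin J → ℕ, ∑ j, n j = N →
        gordonNewellWeight J α μ n * ∑ j, ∑ k, p j k * μ j (n j) =
          ∑ j ∈ Finset.univ.filter (fun j => 1 ≤ n j),
            ∑ k, gordonNewellWeight J α μ (moveJK J j k n) * p k j * μ k (n k + 1)) ∧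
    HasSum
      (fun m : {m : Fin J → ℕ // ∑ j, m j = N} =>
        (∑' m' : {m : Fin J → ℕ // ∑ j, m j = N}, gordonNewellWeight J α μ m'.val)⁻¹ *
          gordonNewellWeight J α μ m.val)
      1 := by
  constructor
  · -- global balance
    intro n hn
    have hbal : ∀ j ∈ Finset.univ.filter (fun j => 1 ≤ n j),
        ∑ k, gordonNewellWeight J α μ (moveJK J j k n) * p k j * μ k (n k + 1) =
          gordonNewellWeight J α μ n * μ j (n j) := by
      intro j hj
      simp only [Finset.mem_filter] at hj
      have hnj := hj.2
      have hterm : ∀ k, gordonNewellWeight J α μ (moveJK J j k n) * p k j * μ k (n k + 1) =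
          gordonNewellWeight J α μ n * μ j (n j) / α j * (α k * p k j) := by
        intro k
        by_cases hk : k = j
        · subst hk; rw [hpd]; ring
        · have key := gn_key α μ hμ hα j k (Ne.symm hk) n hnj
          have hαj : α j ≠ 0 := (hα j).ne'
          have h2 : gordonNewellWeight J α μ (moveJK J j k n) * μ k (n k + 1)
              = gordonNewellWeight J α μ n * μ j (n j) * α k / α j :=
            (eq_div_iff hαj).mpr key
          calc gordonNewellWeight J α μ (moveJK J j k n) * p k j * μ k (n k + 1)
              = gordonNewellWeight J α μ (moveJK J j k n) * μ k (n k + 1) * p k j := by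
                ring
            _ = gordonNewellWeight J α μ n * μ j (n j) * α k / α j * p k j := by rw [h2]
            _ = gordonNewellWeight J α μ n * μ j (n j) / α j * (α k * p k j) := by ring
      rw [Finset.sum_congr rfl (fun k _ => hterm k), ← Finset.mul_sum]
      have : ∑ k, α k * p k j = α j := by rw [← htraffic j, hps j, mul_one]
      rw [this]
      exact div_mul_cancel₀ _ (hα j).ne'
    rw [Finset.sum_congr rfl hbal, ← Finset.mul_sum]
    congr 1
    have : ∀ j : Fin J, ∑ k, p j k * μ j (n j) = μ j (n j) := by
      intro j; rw [← Finset.sum_mul, hps, one_mul]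
    rw [Finset.sum_congr rfl (fun j _ => this j)]
    rw [Finset.sum_filter_of_ne]
    intro j _ hne
    rcases Nat.eq_zero_or_pos (n j) with h | h
    · exact absurd (by rw [h]; exact hμ0 j) hne
    · exact h
  · -- stationarity / normalization
    haveI : Fintype {m : Fin J → ℕ // ∑ j, m j = N} := by
      apply Fintype.ofInjective
        (fun m : {m : Fin J → ℕ // ∑ j, m j = N} =>
          (fun j => (⟨m.1 j, by
            have hle : m.1 j ≤ ∑ i, m.1 i := Finset.single_le_sum
              (fun i _ => Nat.zero_le _) (Finset.mem_univ j)
            rw [m.2] at hle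
            omega⟩ : Fin (N + 1)) : Fin J → Fin (N + 1)))
      intro a b hab
      ext j
      exact congrArg Fin.val (congrFun hab j)
    have hpos : ∀ m : {m : Fin J → ℕ // ∑ j, m j = N},
        0 < gordonNewellWeight J α μ m.1 := by
      intro m
      apply Finset.prod_pos
      intro j _
      apply div_pos (pow_pos (hα j) _)
      apply Finset.prod_pos
      intro r hr
      exact hμ j r (Finset.mem_Icc.mp hr).1
    have hne : Nonempty {m : Fin J → ℕ // ∑ j, m j = N} := by
      refine ⟨⟨fun j => if j = ⟨0, hJ⟩ then N else 0, ?_⟩⟩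
      simp [Finset.sum_ite_eq']
    have hT : (0 : ℝ) < ∑' m' : {m : Fin J → ℕ // ∑ j, m j = N},
        gordonNewellWeight J α μ m'.val := by
      rw [tsum_fintype]
      exact Finset.sum_pos (fun i _ => hpos i) Finset.univ_nonempty
    have hs : HasSum (fun m : {m : Fin J → ℕ // ∑ j, m j = N} =>
        gordonNewellWeight J α μ m.val)
        (∑' m' : {m : Fin J → ℕ // ∑ j, m j = N}, gordonNewellWeight J α μ m'.val) := by
      rw [tsum_fintype]; exact hasSum_fintype _
    have := hs.mul_left (∑' m' : {m : Fin J → ℕ // ∑ j, m j = N},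
        gordonNewellWeight J α μ m'.val)⁻¹
    rwa [inv_mul_cancel₀ hT.ne'] at this
end

section
/- Let J ≥ 1, N ≥ 0, and let ρ : Fin J → ℝ take pairwise distinct values. Then ∑_{n : Fin J → ℕ, ∑_j n j = N} ∏_j (ρ j)^(n j) = ∑_j (ρ j)^(N + J − 1) / ∏_{i ≠ j} (ρ j − ρ i). (Theorem 3.2, Harrison's closed-form expression for the normalizing quantity of a closed queueing network with distinct traffic intensities.) -/
open Finset Polynomial

lemma coeff_basis_top {F : Type*} [Field F] {ι : Type*} [DecidableEq ι]
    (s : Finset ι) (v : ι → F) (i : ι) (hi : i ∈ s) :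
    (Lagrange.basis s v i).coeff (#s - 1) = Lagrange.nodalWeight s v i := by
  rw [Lagrange.basis_eq_prod_sub_inv_mul_nodal_div hi, ← Lagrange.nodal_erase_eq_nodal_div hi,
    Polynomial.coeff_C_mul]
  have h : (#s - 1) = (Lagrange.nodal (s.erase i) v).natDegree := by
    rw [Lagrange.natDegree_nodal, card_erase_of_mem hi]
  rw [h, Lagrange.nodal_monic.coeff_natDegree, mul_one]

lemma vanish {F : Type*} [Field F] {ι : Type*} [DecidableEq ι]
    (s : Finset ι) (v : ι → F) (hv : Set.InjOn v s) (m : ℕ) (hm : m + 2 ≤ #s) :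
    ∑ i ∈ s, v i ^ m * Lagrange.nodalWeight s v i = 0 := by
  have hdeg : (Polynomial.X ^ m : F[X]).degree < (#s : ℕ) := by
    rw [Polynomial.degree_X_pow]
    exact_mod_cast (by omega : m < #s)
  have h := Lagrange.eq_interpolate hv hdeg
  have : (0:F) = ∑ i ∈ s, v i ^ m * Lagrange.nodalWeight s v i := by
    calc (0:F) = (Polynomial.X ^ m : F[X]).coeff (#s - 1) := by
          rw [Polynomial.coeff_X_pow, if_neg (by omega)]
      _ = ((Lagrange.interpolate s v) fun i => (Polynomial.X ^ m : F[X]).eval (v i)).coeff (#s-1) := by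
          rw [← h]
      _ = ∑ i ∈ s, (Polynomial.X ^ m : F[X]).eval (v i) * (Lagrange.basis s v i).coeff (#s-1) := by
          rw [Lagrange.interpolate_apply, Polynomial.finset_sum_coeff]
          exact Finset.sum_congr rfl fun i _ => Polynomial.coeff_C_mul _
      _ = ∑ i ∈ s, v i ^ m * Lagrange.nodalWeight s v i :=
          Finset.sum_congr rfl fun i hi => by
            rw [coeff_basis_top s v i hi, Polynomial.eval_pow, Polynomial.eval_X]
  exact this.symm
open Finset

lemma sum_adT_succ {M : Type*} [AddCommMonoid M] (J N : ℕ) (f : (Fin (J+1) → ℕ) → M) :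
    ∑ n ∈ Finset.Nat.antidiagonalTuple (J+1) N, f n =
      ∑ p ∈ Finset.HasAntidiagonal.antidiagonal N, ∑ m ∈ Finset.Nat.antidiagonalTuple J p.2,
        f (Fin.cons p.1 m) := by
  rw [Finset.sum_sigma']
  refine Finset.sum_nbij' (i := fun n => ⟨(n 0, N - n 0), Fin.tail n⟩)
    (j := fun x => Fin.cons x.1.1 x.2) ?_ ?_ ?_ ?_ ?_
  · intro n hn
    rw [Finset.Nat.mem_antidiagonalTuple, Fin.sum_univ_succ] at hn
    simp only [Finset.mem_sigma, Finset.Nat.mem_antidiagonalTuple, Finset.HasAntidiagonal.mem_antidiagonal]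
    have ht : ∑ i, Fin.tail n i = ∑ i : Fin J, n i.succ := rfl
    constructor
    · omega
    · rw [ht]; omega
  · intro x hx
    simp only [Finset.mem_sigma, Finset.HasAntidiagonal.mem_antidiagonal,
      Finset.Nat.mem_antidiagonalTuple] at hx
    rw [Finset.Nat.mem_antidiagonalTuple, Fin.sum_univ_succ]
    simp only [Fin.cons_zero, Fin.cons_succ]
    rw [hx.2]; exact hx.1
  · intro n hn
    exact Fin.cons_self_tail n
  · intro x hx
    simp only [Finset.mem_sigma, Finset.HasAntidiagonal.mem_antidiagonal,
      Finset.Nat.mem_antidiagonalTuple] at hx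
    refine Sigma.ext ?_ (heq_of_eq ?_)
    · simp only [Fin.cons_zero]
      exact Prod.ext rfl (by simp; omega)
    · simp [Fin.tail_cons]
  · intro n hn
    rw [Fin.cons_self_tail n]
open Finset

lemma erase_zero_fin (J : ℕ) :
    (univ : Finset (Fin (J+1))).erase 0 =
      univ.map ⟨Fin.succ, Fin.succ_injective J⟩ := by
  ext i
  simp only [mem_erase, mem_univ, and_true, mem_map, Function.Embedding.coeFn_mk]
  constructor
  · intro h
    exact ⟨i.pred h, by simp, Fin.succ_pred i h⟩
  · rintro ⟨a, -, rfl⟩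
    exact Fin.succ_ne_zero a

lemma erase_succ_fin (J : ℕ) (j : Fin J) :
    (univ : Finset (Fin (J+1))).erase j.succ =
      insert 0 ((univ.erase j).map ⟨Fin.succ, Fin.succ_injective J⟩) := by
  ext i
  simp only [mem_erase, mem_univ, and_true, mem_insert, mem_map,
    Function.Embedding.coeFn_mk]
  constructor
  · intro h
    rcases Fin.eq_zero_or_eq_succ i with h0 | ⟨a, rfl⟩
    · exact Or.inl h0
    · exact Or.inr ⟨a, fun hc => h (by rw [hc]), rfl⟩
  · rintro (rfl | ⟨a, ha, rfl⟩)
    · exact (Fin.succ_ne_zero j).symm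
    · exact fun hc => ha (Fin.succ_injective J hc)
open Finset

lemma harrison_aux : ∀ (J : ℕ) (ρ : Fin (J+1) → ℝ), Function.Injective ρ → ∀ N : ℕ,
    ∑ n ∈ Finset.Nat.antidiagonalTuple (J+1) N, ∏ j, ρ j ^ n j =
      ∑ j, ρ j ^ (N + J) * ∏ i ∈ Finset.univ.erase j, (ρ j - ρ i)⁻¹ := by
  intro J
  induction J with
  | zero =>
    intro ρ _ N
    simp [Fin.prod_univ_one, Fin.sum_univ_one]
  | succ J IH =>
    intro ρ hρ N
    set x := ρ 0 with hx
    set σ : Fin (J+1) → ℝ := fun j => ρ j.succ with hσdef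
    have hσ : Function.Injective σ := fun a b h => Fin.succ_injective _ (hρ h)
    have hne : ∀ j, σ j - x ≠ 0 := fun j =>
      sub_ne_zero_of_ne fun h => Fin.succ_ne_zero j (hρ h)
    set w : Fin (J+1) → ℝ := fun j => ∏ i ∈ Finset.univ.erase j, (σ j - σ i)⁻¹ with hw
    set P : ℝ := ∏ i : Fin (J+1), (x - σ i)⁻¹ with hP
    -- erase products over Fin (J+2)
    have w0 : ∏ i ∈ (univ : Finset (Fin (J+2))).erase 0, (x - ρ i)⁻¹ = P := by
      rw [erase_zero_fin, Finset.prod_map]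
      rfl
    have wsucc : ∀ j : Fin (J+1),
        ∏ i ∈ (univ : Finset (Fin (J+2))).erase j.succ, (ρ j.succ - ρ i)⁻¹
          = (σ j - x)⁻¹ * w j := by
      intro j
      rw [erase_succ_fin, Finset.prod_insert (by simp [Fin.succ_ne_zero]),
        Finset.prod_map]
      rfl
    -- the vanishing identity
    have hvan : x ^ J * P + ∑ j, σ j ^ J * ((σ j - x)⁻¹ * w j) = 0 := by
      have h := vanish (univ : Finset (Fin (J+2))) ρ (hρ.injOn)
        J (by simp)
      rw [Fin.sum_univ_succ] at h
      unfold Lagrange.nodalWeight at h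
      rw [← hx] at h
      rw [w0] at h
      calc x ^ J * P + ∑ j, σ j ^ J * ((σ j - x)⁻¹ * w j)
          = x ^ J * P + ∑ j : Fin (J+1),
              ρ j.succ ^ J * ∏ i ∈ (univ : Finset (Fin (J+2))).erase j.succ, (ρ j.succ - ρ i)⁻¹ := by
            congr 1
            exact Finset.sum_congr rfl fun j _ => by rw [wsucc j]
        _ = 0 := h
    -- geometric sum
    have geo : ∀ j : Fin (J+1),
        ∑ p ∈ Finset.HasAntidiagonal.antidiagonal N, x ^ p.1 * σ j ^ p.2
          = (x ^ (N+1) - σ j ^ (N+1)) * (x - σ j)⁻¹ := by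
      intro j
      rw [Finset.Nat.sum_antidiagonal_eq_sum_range_succ_mk]
      have h2 : (∑ i ∈ range (N+1), x ^ i * σ j ^ (N - i)) * (x - σ j)
          = x ^ (N+1) - σ j ^ (N+1) := by
        simpa using geom_sum₂_mul x (σ j) (N+1)
      rw [eq_mul_inv_iff_mul_eq₀ (fun h => hne j (by linarith))]
      simpa using h2
    -- compute LHS
    have lhs_eq : ∑ n ∈ Finset.Nat.antidiagonalTuple (J+2) N, ∏ j, ρ j ^ n j
        = ∑ j, σ j ^ J * w j * ((x ^ (N+1) - σ j ^ (N+1)) * (x - σ j)⁻¹) := by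
      rw [sum_adT_succ (J+1) N]
      have step1 : ∀ p ∈ Finset.HasAntidiagonal.antidiagonal N,
          ∑ m ∈ Finset.Nat.antidiagonalTuple (J+1) p.2, ∏ j, ρ j ^ (Fin.cons p.1 m) j
            = x ^ p.1 * ∑ j, σ j ^ (p.2 + J) * w j := by
        intro p _
        rw [← IH σ hσ p.2, Finset.mul_sum]
        refine Finset.sum_congr rfl fun m _ => ?_
        rw [Fin.prod_univ_succ]
        simp only [Fin.cons_zero, Fin.cons_succ]
        rfl
      rw [Finset.sum_congr rfl step1]
      have swap : ∑ p ∈ Finset.HasAntidiagonal.antidiagonal N, x ^ p.1 * ∑ j, σ j ^ (p.2 + J) * w j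
          = ∑ j, σ j ^ J * w j * ∑ p ∈ Finset.HasAntidiagonal.antidiagonal N, x ^ p.1 * σ j ^ p.2 := by
        simp_rw [Finset.mul_sum]
        rw [Finset.sum_comm]
        refine Finset.sum_congr rfl fun j _ => Finset.sum_congr rfl fun p _ => ?_
        rw [pow_add]
        ring
      rw [swap]
      exact Finset.sum_congr rfl fun j _ => by rw [geo j]
    rw [lhs_eq]
    -- compute RHS
    conv_rhs => rw [Fin.sum_univ_succ]
    rw [w0]
    have : ∑ j : Fin (J+1), ρ j.succ ^ (N + (J+1)) *
        ∏ i ∈ (univ : Finset (Fin (J+2))).erase j.succ, (ρ j.succ - ρ i)⁻¹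
        = ∑ j, σ j ^ (N + J + 1) * ((σ j - x)⁻¹ * w j) := by
      refine Finset.sum_congr rfl fun j _ => ?_
      rw [wsucc j]
      ring_nf
      rfl
    rw [this, ← hx]
    have hx_term : x ^ (N + (J+1)) * P
        = x ^ (N+1) * (-(∑ j, σ j ^ J * ((σ j - x)⁻¹ * w j))) := by
      have hXP : x ^ J * P = -(∑ j, σ j ^ J * ((σ j - x)⁻¹ * w j)) := by linarith [hvan]
      rw [← hXP]
      ring
    rw [hx_term]
    rw [mul_neg, Finset.mul_sum, ← Finset.sum_neg_distrib, ← Finset.sum_add_distrib]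
    refine Finset.sum_congr rfl fun j _ => ?_
    have h1 : σ j - x ≠ 0 := hne j
    have h2 : x - σ j ≠ 0 := fun h => h1 (by linarith)
    field_simp
    ring

/-- **Theorem 3.2, Harrison's formula.** For `J ≥ 1`, `N ≥ 0`, and
pairwise distinct traffic intensities `ρ : Fin J → ℝ`, the normalizing quantity of a
closed queueing network (the complete homogeneous symmetric polynomial of degree `N`)
satisfies
`∑_{n : ∑ n j = N} ∏_j (ρ j)^(n j) = ∑_j (ρ j)^(N + J - 1) / ∏_{i ≠ j} (ρ j - ρ i)`. -/
theorem harrison_normalizing_constant_distinct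
    (J N : ℕ) (hJ : 1 ≤ J) (ρ : Fin J → ℝ) (hρ : Function.Injective ρ) :
    ∑ n ∈ Finset.Nat.antidiagonalTuple J N, ∏ j, (ρ j) ^ (n j) =
      ∑ j, (ρ j) ^ (N + J - 1) / ∏ i ∈ Finset.univ.erase j, (ρ j - ρ i) := by
  obtain ⟨J', rfl⟩ : ∃ J', J = J' + 1 := ⟨J - 1, by omega⟩
  have h := harrison_aux J' ρ hρ N
  have hexp : N + (J' + 1) - 1 = N + J' := by omega
  rw [hexp]
  rw [h]
  exact Finset.sum_congr rfl fun j _ => by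
    rw [div_eq_mul_inv, ← Finset.prod_inv_distrib]
end

section
/- Let J ≥ 1, N ≥ 0, and define G_N : ℝ^J → ℝ by G_N(x) = ∑_{n : Fin J → ℕ, ∑_j n j = N} ∏_j (x j)^(n j). Then duplicating the last variable corresponds to applying the operator (1 + x_J D_J): for all x_1, …, x_J ∈ ℝ, ∑_{n : Fin (J+1) → ℕ, ∑ n j = N} (∏_{j < J} (x j)^(n j)) * (x_J)^(n J + n (J+1)) = G_N(x_1, …, x_J) + x_J * (∂G_N/∂x_J)(x_1, …, x_J), where ∂G_N/∂x_J is the derivative of the polynomial function t ↦ G_N(x_1, …, x_{J−1}, t) at t = x_J. -/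
open Finset

/-- `G J N x = ∑_{n : Fin J → ℕ, ∑ n j = N} ∏_j (x j)^(n j)`, the complete homogeneous
symmetric polynomial of degree `N` in `J` variables (the reciprocal of the normalizing
constant of a closed Gordon–Newell network with traffic intensities `x j`). -/
noncomputable def normConst (J N : ℕ) (x : Fin J → ℝ) : ℝ :=
  ∑ n ∈ Finset.Nat.antidiagonalTuple J N, ∏ j, (x j) ^ (n j)

lemma prod_update_pow (J : ℕ) (x : Fin J → ℝ) (i : Fin J) (E : Fin J → ℕ) (t : ℝ) :
    ∏ j, (Function.update x i t j) ^ E j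
      = t ^ E i * ∏ j ∈ Finset.univ.erase i, x j ^ E j := by
  rw [← Finset.mul_prod_erase Finset.univ _ (Finset.mem_univ i), Function.update_self]
  congr 1
  exact Finset.prod_congr rfl fun j hj => by
    rw [Function.update_of_ne (Finset.ne_of_mem_erase hj)]

lemma aux_duplicate (J N : ℕ) (x : Fin J → ℝ) (i : Fin J) :
    ∑ n ∈ Finset.Nat.antidiagonalTuple (J + 1) N,
        (∏ j : Fin J, (x j) ^ (n j.castSucc)) * (x i) ^ (n (Fin.last J)) =
      normConst J N x +
        x i * deriv (fun t : ℝ => normConst J N (Function.update x i t)) (x i) := by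
  classical
  set A := Finset.Nat.antidiagonalTuple J N with hA
  -- derivative computation
  have hC : ∀ t : ℝ, normConst J N (Function.update x i t)
      = ∑ n ∈ A, t ^ n i * ∏ j ∈ Finset.univ.erase i, x j ^ n j := by
    intro t
    unfold normConst
    exact Finset.sum_congr rfl fun n _ => prod_update_pow J x i n t
  have hderiv : deriv (fun t : ℝ => normConst J N (Function.update x i t)) (x i)
      = ∑ n ∈ A, (n i : ℝ) * (x i) ^ (n i - 1) * ∏ j ∈ Finset.univ.erase i, x j ^ n j := by
    have H : HasDerivAt (fun t : ℝ => ∑ n ∈ A, t ^ n i * ∏ j ∈ Finset.univ.erase i, x j ^ n j)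
        (∑ n ∈ A, (n i : ℝ) * (x i) ^ (n i - 1) * ∏ j ∈ Finset.univ.erase i, x j ^ n j) (x i) :=
      HasDerivAt.fun_sum fun n _ => (hasDerivAt_pow (n i) (x i)).mul_const _
    simp only [hC]
    exact H.deriv
  have hpow : ∀ n : Fin J → ℕ,
      x i * ((n i : ℝ) * (x i) ^ (n i - 1) * ∏ j ∈ Finset.univ.erase i, x j ^ n j)
        = (n i : ℝ) * ∏ j, x j ^ n j := by
    intro n
    rw [← Finset.mul_prod_erase Finset.univ (fun j => x j ^ n j) (Finset.mem_univ i)]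
    rcases Nat.eq_zero_or_pos (n i) with h | h
    · simp [h]
    · obtain ⟨k, hk⟩ : ∃ k, n i = k + 1 := ⟨n i - 1, by omega⟩
      rw [hk]
      simp only [Nat.add_sub_cancel]
      rw [pow_succ]
      ring
  have hRHS : normConst J N x +
      x i * deriv (fun t : ℝ => normConst J N (Function.update x i t)) (x i)
      = ∑ n ∈ A, ((n i : ℝ) + 1) * ∏ j, x j ^ n j := by
    rw [hderiv, Finset.mul_sum]
    unfold normConst
    rw [← Finset.sum_add_distrib]
    exact Finset.sum_congr rfl fun n hn => by rw [hpow n]; ring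
  rw [hRHS]
  -- combinatorial bijection
  refine Finset.sum_nbij'
    (g := fun p : (n : Fin J → ℕ) × ℕ => ∏ j, x j ^ p.1 j)
    (i := fun m => (⟨Function.update (fun j : Fin J => m j.castSucc) i
        (m i.castSucc + m (Fin.last J)), m (Fin.last J)⟩ :
        (n : Fin J → ℕ) × ℕ))
    (j := fun p => Fin.snoc (Function.update p.1 i (p.1 i - p.2)) p.2)
    (t := A.sigma fun n => Finset.range (n i + 1)) ?_ ?_ ?_ ?_ ?_ |>.trans ?_
  · -- maps into sigma
    intro m hm
    rw [Finset.Nat.mem_antidiagonalTuple, Fin.sum_univ_castSucc] at hm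
    refine Finset.mem_sigma.mpr ⟨?_, ?_⟩
    · rw [hA, Finset.Nat.mem_antidiagonalTuple,
        Finset.sum_update_of_mem (Finset.mem_univ i)]
      rw [← Finset.add_sum_erase Finset.univ (fun j : Fin J => m j.castSucc)
        (Finset.mem_univ i)] at hm
      simp only [Finset.sdiff_singleton_eq_erase]
      omega
    · simp [Function.update_self]
  · -- inverse maps back
    rintro ⟨n, k⟩ hp
    rw [Finset.mem_sigma] at hp
    obtain ⟨hn, hk⟩ := hp
    rw [hA, Finset.Nat.mem_antidiagonalTuple] at hn
    rw [Finset.mem_range] at hk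
    have h1 : (⟨n, k⟩ : (_ : Fin J → ℕ) × ℕ).fst = n := rfl
    have h2 : (⟨n, k⟩ : (_ : Fin J → ℕ) × ℕ).snd = k := rfl
    simp only [h1, h2] at hn hk ⊢
    rw [Finset.Nat.mem_antidiagonalTuple, Fin.sum_univ_castSucc]
    simp only [Fin.snoc_castSucc, Fin.snoc_last]
    rw [Finset.sum_update_of_mem (Finset.mem_univ i)]
    rw [← Finset.add_sum_erase Finset.univ n (Finset.mem_univ i)] at hn
    simp only [Finset.sdiff_singleton_eq_erase]
    omega
  · -- left inverse
    intro m hm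
    funext j
    refine Fin.lastCases ?_ ?_ j
    · simp [Fin.snoc_last]
    · intro j
      simp only [Fin.snoc_castSucc]
      by_cases hj : j = i
      · subst hj
        simp [Function.update_self]
      · simp [Function.update_of_ne hj]
  · -- right inverse
    rintro ⟨n, k⟩ hp
    rw [Finset.mem_sigma] at hp
    obtain ⟨hn, hk⟩ := hp
    rw [Finset.mem_range] at hk
    have h1 : (⟨n, k⟩ : (_ : Fin J → ℕ) × ℕ).fst = n := rfl
    have h2 : (⟨n, k⟩ : (_ : Fin J → ℕ) × ℕ).snd = k := rfl
    simp only [h1, h2] at hn hk ⊢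
    have hk' : k ≤ n i := by omega
    refine Sigma.ext ?_ ?_
    · funext j
      by_cases hj : j = i
      · subst hj
        simp only [Fin.snoc_castSucc, Fin.snoc_last, Function.update_self]
        omega
      · simp [Fin.snoc_castSucc, Function.update_of_ne hj]
    · simp [Fin.snoc_last]
  · -- value equality
    intro m hm
    show (∏ j : Fin J, (x j) ^ (m j.castSucc)) * (x i) ^ (m (Fin.last J))
      = ∏ j, x j ^ (Function.update (fun j : Fin J => m j.castSucc) i
          (m i.castSucc + m (Fin.last J)) j)
    have : (fun j => x j ^ (Function.update (fun j : Fin J => m j.castSucc) i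
          (m i.castSucc + m (Fin.last J)) j))
        = Function.update (fun j => x j ^ m j.castSucc) i
          (x i ^ (m i.castSucc + m (Fin.last J))) := by
      funext j
      by_cases hj : j = i
      · subst hj; simp
      · simp [Function.update_of_ne hj]
    rw [this, Finset.prod_update_of_mem (Finset.mem_univ i), pow_add,
      ← Finset.mul_prod_erase Finset.univ (fun j => x j ^ m j.castSucc) (Finset.mem_univ i)]
    simp only [Finset.sdiff_singleton_eq_erase]
    ring
  · -- sum over sigma
    rw [Finset.sum_sigma]
    refine Finset.sum_congr rfl fun n hn => ?_
    dsimp only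
    rw [Finset.sum_const, Finset.card_range, nsmul_eq_mul]
    push_cast
    ring


/-- **single-duplication instance of Theorem 3.3, Harrison's degenerate
case.** Duplicating the last variable of `G_N` corresponds to applying the operator
`(1 + x_J D_J)`:
`∑_{n : Fin (J+1) → ℕ, ∑ n j = N} (∏_{j < J} (x j)^(n j)) * (x_J)^(n J + n (J+1))
  = G_N(x) + x_J * (∂G_N/∂x_J)(x)`,
where `∂G_N/∂x_J` is the derivative of `t ↦ G_N(x_1, …, x_{J−1}, t)` at `t = x_J`. -/
theorem duplicate_last_variable_eq_one_add_deriv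
    (J N : ℕ) (hJ : 1 ≤ J) (x : Fin J → ℝ) :
    ∑ n ∈ Finset.Nat.antidiagonalTuple (J + 1) N,
        (∏ j : Fin J, (x j) ^ (n j.castSucc)) *
          (x (⟨J - 1, by omega⟩ : Fin J)) ^ (n (Fin.last J)) =
      normConst J N x +
        x (⟨J - 1, by omega⟩ : Fin J) *
          deriv (fun t : ℝ => normConst J N (Function.update x (⟨J - 1, by omega⟩ : Fin J) t))
            (x (⟨J - 1, by omega⟩ : Fin J)) := by
  exact aux_duplicate J N x ⟨J - 1, by omega⟩
end
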